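/- arXiv:2310.14616 — 2 statements merged into one kernel-verified Lean document; each statement's English description precedes it below -/
import Mathlib

section
/- Let Y ∈ ℝ^{d×d} be symmetric and nonzero, and set a = √(‖Y‖_op/2)/2 > 0. Define D(x) = (1/2)‖x xᵀ − Y‖_F². Then for every x ∈ ℝ^d, ‖∇²D(x)‖_op ≤ (3/a)‖∇D(x)‖ + 20a², where ∇D(x) = (x xᵀ − Y)x and ∇²D(x) = ‖x‖² I + 2x xᵀ − Y. -/
/-! With `T = ‖x‖`, `L = ‖Y‖ = 8a²` and `G = ‖∇D(x)‖ ≥ T³ - L T`, the triangle inequality gives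
`‖∇²D(x)‖ ≤ 3T² + L`, which is enough when `T ≤ 2a`. For larger `T` write a direction as
`v = c x + w` with `w ⊥ x`. Since `Y x = T² x - ∇D(x)`, we get
`∇²D(x) v = T² v + c T² x + c ∇D(x) - Y w`, and Cauchy–Schwarz in `ℝ²` bounds
`‖∇²D(x)‖ ≤ T² + √(T⁴ + L²) + G / T`. The cubic lower bound on `G` turns this into the claim. -/

open RealInnerProductSpace

theorem mul_add_mul_le_sqrt_mul_sqrt (a b c d : ℝ) :
    a * b + c * d ≤ √(a ^ 2 + c ^ 2) * √(b ^ 2 + d ^ 2) := by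
  rw [← Real.sqrt_mul (by positivity)]
  refine Real.le_sqrt_of_sq_le ?_
  nlinarith [sq_nonneg (a * d - b * c)]

theorem sq_add_sqrt_add_div_le {a T G : ℝ} (ha : 0 < a) (hT : 2 * a < T) (hG0 : 0 ≤ G)
    (hG : T ^ 3 - 8 * a ^ 2 * T ≤ G) :
    T ^ 2 + √(T ^ 4 + (8 * a ^ 2) ^ 2) + G / T ≤ 3 / a * G + 20 * a ^ 2 := by
  have hGT : G / T ≤ G / (2 * a) := div_le_div_of_nonneg_left hG0 (by positivity) hT.le
  have hsplit : 3 / a * G = G / (2 * a) + 5 / 2 * (G / a) := by field_simp; ring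
  have hGa : 0 ≤ G / a := div_nonneg hG0 ha.le
  rcases le_or_gt (T ^ 2) (8 * a ^ 2) with hsmall | hlarge
  · have hS : √(T ^ 4 + (8 * a ^ 2) ^ 2) ≤ 12 * a ^ 2 :=
      (Real.sqrt_le_left (by positivity)).mpr (by nlinarith [sq_nonneg T])
    linarith
  · have hS : √(T ^ 4 + (8 * a ^ 2) ^ 2) ≤ T ^ 2 + 4 * a ^ 2 :=
      (Real.sqrt_le_left (by positivity)).mpr (by nlinarith)
    have hGlarge : 2 * (T ^ 2 - 8 * a ^ 2) ≤ G / a := by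
      rw [le_div_iff₀ ha]
      nlinarith
    linarith

namespace SymmFactor

variable {E : Type*} [NormedAddCommGroup E] [InnerProductSpace ℝ E] (A : E →L[ℝ] E) (x : E)

/- Gradient and Hessian of `x ↦ ½ ‖x xᵀ - A‖²`, for an arbitrary operator `A`. -/

noncomputable def grad : E := ‖x‖ ^ 2 • x - A x

noncomputable def hess : E →L[ℝ] E :=
  ‖x‖ ^ 2 • ContinuousLinearMap.id ℝ E + (2 : ℝ) • (innerSL ℝ x).smulRight x - A

theorem hess_apply (v : E) : hess A x v = ‖x‖ ^ 2 • v + (2 * ⟪x, v⟫) • x - A v := by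
  simp [hess, mul_smul]

theorem norm_hess_le : ‖hess A x‖ ≤ 3 * ‖x‖ ^ 2 + ‖A‖ := by
  refine ContinuousLinearMap.opNorm_le_bound _ (by positivity) fun v => ?_
  have hinner : |⟪x, v⟫| ≤ ‖x‖ * ‖v‖ := abs_real_inner_le_norm x v
  calc ‖hess A x v‖ ≤ ‖x‖ ^ 2 * ‖v‖ + 2 * |⟪x, v⟫| * ‖x‖ + ‖A‖ * ‖v‖ := by
        rw [hess_apply]
        refine (norm_sub_le _ _).trans (add_le_add ((norm_add_le _ _).trans_eq ?_) (A.le_opNorm v))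
        simp [norm_smul]
    _ ≤ (3 * ‖x‖ ^ 2 + ‖A‖) * ‖v‖ := by nlinarith [norm_nonneg x]

theorem norm_pow_three_sub_le_norm_grad : ‖x‖ ^ 3 - ‖A‖ * ‖x‖ ≤ ‖grad A x‖ := by
  have h := norm_sub_norm_le (‖x‖ ^ 2 • x) (A x)
  rw [norm_smul, norm_pow, norm_norm, ← pow_succ] at h
  exact (sub_le_sub_left (A.le_opNorm x) _).trans h

theorem hess_apply_smul_add {w : E} (hw : ⟪x, w⟫ = 0) (c : ℝ) :
    hess A x (c • x + w) = ‖x‖ ^ 2 • (c • x + w) + (c * ‖x‖ ^ 2) • x + c • grad A x - A w := by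
  rw [hess_apply, grad, inner_add_right, inner_smul_right, real_inner_self_eq_norm_sq, hw,
    map_add, map_smul]
  match_scalars <;> ring

theorem norm_hess_le_of_ne_zero (hx : x ≠ 0) :
    ‖hess A x‖ ≤ ‖x‖ ^ 2 + √(‖x‖ ^ 4 + ‖A‖ ^ 2) + ‖grad A x‖ / ‖x‖ := by
  have hx0 : 0 < ‖x‖ := norm_pos_iff.mpr hx
  refine ContinuousLinearMap.opNorm_le_bound _ (by positivity) fun v => ?_
  set c := ⟪x, v⟫ / ‖x‖ ^ 2
  set w := v - c • x
  have hv : v = c • x + w := (add_sub_cancel _ _).symm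
  have hw : ⟪x, w⟫ = 0 := by
    rw [inner_sub_right, inner_smul_right, real_inner_self_eq_norm_sq]
    simp only [c]
    rw [div_mul_cancel₀ _ (pow_ne_zero 2 hx0.ne'), sub_self]
  have hpyth : ‖v‖ ^ 2 = (|c| * ‖x‖) ^ 2 + ‖w‖ ^ 2 := by
    conv_lhs => rw [hv]
    rw [norm_add_sq_real, real_inner_smul_left, hw, norm_smul, Real.norm_eq_abs]
    ring
  have hcx : |c| * ‖x‖ ≤ ‖v‖ :=
    (pow_le_pow_iff_left₀ (by positivity) (norm_nonneg v) two_ne_zero).mp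
      (by nlinarith [sq_nonneg ‖w‖])
  have hcauchy : |c| * ‖x‖ * ‖x‖ ^ 2 + ‖A‖ * ‖w‖ ≤ √(‖x‖ ^ 4 + ‖A‖ ^ 2) * ‖v‖ := by
    have := mul_add_mul_le_sqrt_mul_sqrt (|c| * ‖x‖) (‖x‖ ^ 2) ‖w‖ ‖A‖
    rw [← hpyth, Real.sqrt_sq (norm_nonneg v), ← pow_mul] at this
    linarith
  have hgrad : |c| * ‖grad A x‖ ≤ ‖grad A x‖ / ‖x‖ * ‖v‖ := by
    rw [div_mul_eq_mul_div, le_div_iff₀ hx0]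
    nlinarith [norm_nonneg (grad A x)]
  calc ‖hess A x v‖
      = ‖‖x‖ ^ 2 • v + (c * ‖x‖ ^ 2) • x + c • grad A x - A w‖ := by
        conv_lhs => rw [hv, hess_apply_smul_add A x hw, ← hv]
    _ ≤ ‖x‖ ^ 2 * ‖v‖ + |c| * ‖x‖ * ‖x‖ ^ 2 + |c| * ‖grad A x‖ + ‖A‖ * ‖w‖ := by
        refine (norm_sub_le _ _).trans (add_le_add ((norm_add₃_le).trans_eq ?_) (A.le_opNorm w))
        simp only [norm_smul, norm_mul, norm_pow, Real.norm_eq_abs, abs_norm]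
        ring
    _ ≤ (‖x‖ ^ 2 + √(‖x‖ ^ 4 + ‖A‖ ^ 2) + ‖grad A x‖ / ‖x‖) * ‖v‖ := by
        linarith

theorem norm_hess_le_of_norm_eq {a : ℝ} (ha : 0 < a) (hA : ‖A‖ = 8 * a ^ 2) :
    ‖hess A x‖ ≤ 3 / a * ‖grad A x‖ + 20 * a ^ 2 := by
  rcases le_or_gt ‖x‖ (2 * a) with hsmall | hlarge
  · calc ‖hess A x‖ ≤ 3 * ‖x‖ ^ 2 + ‖A‖ := norm_hess_le A x
      _ ≤ 20 * a ^ 2 := by rw [hA]; nlinarith [norm_nonneg x]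
      _ ≤ 3 / a * ‖grad A x‖ + 20 * a ^ 2 := le_add_of_nonneg_left (by positivity)
  · have hx : x ≠ 0 := norm_pos_iff.mp (by linarith)
    have hgrad := norm_pow_three_sub_le_norm_grad A x
    rw [hA] at hgrad
    calc ‖hess A x‖ ≤ ‖x‖ ^ 2 + √(‖x‖ ^ 4 + ‖A‖ ^ 2) + ‖grad A x‖ / ‖x‖ :=
          norm_hess_le_of_ne_zero A x hx
      _ ≤ 3 / a * ‖grad A x‖ + 20 * a ^ 2 := by
          rw [hA]
          exact sq_add_sqrt_add_div_le ha hlarge (norm_nonneg _) hgrad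

end SymmFactor

theorem Matrix.toEuclideanCLM_vecMulVec {n : Type*} [Fintype n] [DecidableEq n]
    (u v : EuclideanSpace ℝ n) :
    Matrix.toEuclideanCLM (𝕜 := ℝ) (Matrix.vecMulVec u v) = (innerSL ℝ v).smulRight u := by
  ext w i
  rw [← WithLp.toLp_ofLp (p := 2) w, Matrix.toEuclideanCLM_toLp, Matrix.vecMulVec_mulVec]
  simp [PiLp.inner_apply, dotProduct, mul_comm]

theorem Matrix.toEuclideanCLM_hessian {d : ℕ} (Y : Matrix (Fin d) (Fin d) ℝ)
    (x : EuclideanSpace ℝ (Fin d)) :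
    Matrix.toEuclideanCLM (𝕜 := ℝ) (‖x‖ ^ 2 • (1 : Matrix (Fin d) (Fin d) ℝ)
      + (2 : ℝ) • Matrix.vecMulVec (x : Fin d → ℝ) (x : Fin d → ℝ) - Y)
      = SymmFactor.hess (Matrix.toEuclideanCLM (𝕜 := ℝ) Y) x := by
  rw [map_sub, map_add, map_smul, map_smul, map_one, Matrix.toEuclideanCLM_vecMulVec]
  rfl

theorem stmt_4_general {d : ℕ} (Y : Matrix (Fin d) (Fin d) ℝ) (hY0 : Y ≠ 0)
    (a : ℝ) (ha : a = Real.sqrt (‖Matrix.toEuclideanCLM (𝕜 := ℝ) Y‖ / 2) / 2)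
    (x : EuclideanSpace ℝ (Fin d)) :
    ‖Matrix.toEuclideanCLM (𝕜 := ℝ)
        (‖x‖ ^ 2 • (1 : Matrix (Fin d) (Fin d) ℝ)
          + (2 : ℝ) • Matrix.vecMulVec (x : Fin d → ℝ) (x : Fin d → ℝ) - Y)‖ ≤
      (3 / a) * ‖‖x‖ ^ 2 • x - Matrix.toEuclideanCLM (𝕜 := ℝ) Y x‖ + 20 * a ^ 2 := by
  have hnorm : ‖Matrix.toEuclideanCLM (𝕜 := ℝ) Y‖ = 8 * a ^ 2 := by
    rw [ha, div_pow, Real.sq_sqrt (by positivity)]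
    ring
  have hpos : 0 < ‖Matrix.toEuclideanCLM (𝕜 := ℝ) Y‖ :=
    norm_pos_iff.mpr ((map_ne_zero_iff _ Matrix.toEuclideanCLM.injective).mpr hY0)
  have ha0 : 0 < a := by
    have : 0 ≤ a := by rw [ha]; positivity
    nlinarith
  rw [Matrix.toEuclideanCLM_hessian]
  exact SymmFactor.norm_hess_le_of_norm_eq _ x ha0 hnorm

theorem stmt_4 {d : ℕ} (Y : Matrix (Fin d) (Fin d) ℝ) (hY : Y.IsSymm) (hY0 : Y ≠ 0)
    (a : ℝ) (ha : a = Real.sqrt (‖Matrix.toEuclideanCLM (𝕜 := ℝ) Y‖ / 2) / 2)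
    (x : EuclideanSpace ℝ (Fin d)) :
    ‖Matrix.toEuclideanCLM (𝕜 := ℝ)
        (‖x‖ ^ 2 • (1 : Matrix (Fin d) (Fin d) ℝ)
          + (2 : ℝ) • Matrix.vecMulVec (x : Fin d → ℝ) (x : Fin d → ℝ) - Y)‖ ≤
      (3 / a) * ‖‖x‖ ^ 2 • x - Matrix.toEuclideanCLM (𝕜 := ℝ) Y x‖ + 20 * a ^ 2 :=
  stmt_4_general Y hY0 a ha x
end

section
/- Let f : ℝ^d → ℝ be three times continuously differentiable. If there exist H1 > 0, H2 ≥ 0, R > 0 such that ‖∇²f(y) − ∇²f(x)‖_op ≤ (H1 + H2‖∇f(x)‖)‖y − x‖ for all ‖y − x‖ ≤ R, then for every x ∈ ℝ^d, ‖∇³f(x)‖_F ≤ d^{3/2}(H1 + H2‖∇f(x)‖), where ‖∇³f(x)‖_F = (Σ_{i,j,k} |∂³f(x)/∂x_i∂x_j∂x_k|²)^{1/2}. -/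
/-! The weak Lipschitz condition at `x` bounds the operator norm of `∇³f(x)`, the derivative of
the Hessian at `x`, by `H1 + H2‖∇f(x)‖` (converse of the mean value inequality; `gradient` and
`fderiv` differ by the Riesz isometry, which preserves that norm). Each of the `d³` entries
`∇³f(x)[eᵢ, eⱼ, eₖ]` is at most the operator norm, whence the Frobenius bound. -/

open Metric Topology

section ThirdDerivative

variable {𝕜 : Type*} [NontriviallyNormedField 𝕜]
  {E : Type*} [NormedAddCommGroup E] [NormedSpace 𝕜 E]
  {F : Type*} [NormedAddCommGroup F] [NormedSpace 𝕜 F]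

theorem norm_iteratedFDeriv_three_le_of_lip' {f : E → F} {x : E} {C : ℝ} (hC : 0 ≤ C)
    (hlip : ∀ᶠ y in 𝓝 x,
      ‖fderiv 𝕜 (fderiv 𝕜 f) y - fderiv 𝕜 (fderiv 𝕜 f) x‖ ≤ C * ‖y - x‖) :
    ‖iteratedFDeriv 𝕜 3 f x‖ ≤ C := by
  rw [← norm_iteratedFDeriv_fderiv, ← norm_iteratedFDeriv_fderiv, norm_iteratedFDeriv_one]
  exact norm_fderiv_le_of_lip' 𝕜 hC hlip

end ThirdDerivative

theorem norm_fderiv_gradient_sub {E : Type*} [NormedAddCommGroup E] [InnerProductSpace ℝ E]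
    [CompleteSpace E] (f : E → ℝ) (x y : E) :
    ‖fderiv ℝ (gradient f) y - fderiv ℝ (gradient f) x‖ =
      ‖fderiv ℝ (fderiv ℝ f) y - fderiv ℝ (fderiv ℝ f) x‖ := by
  have hgrad : gradient f = (InnerProductSpace.toDual ℝ E).symm ∘ fderiv ℝ f := rfl
  rw [hgrad, LinearIsometryEquiv.comp_fderiv, LinearIsometryEquiv.comp_fderiv,
    ← ContinuousLinearMap.comp_sub]
  exact LinearIsometry.norm_toContinuousLinearMap_comp _

theorem sqrt_sum_sum_sum_sq_le {ι : Type*} [Fintype ι] {a : ι → ι → ι → ℝ} {L : ℝ}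
    (hL : 0 ≤ L) (ha : ∀ i j k, |a i j k| ≤ L) :
    √(∑ i, ∑ j, ∑ k, a i j k ^ 2) ≤ (Fintype.card ι : ℝ) ^ ((3 : ℝ) / 2) * L := by
  have hsum : ∑ i, ∑ j, ∑ k, a i j k ^ 2 ≤ (Fintype.card ι : ℝ) ^ 3 * L ^ 2 := by
    calc ∑ i, ∑ j, ∑ k, a i j k ^ 2 ≤ ∑ _i : ι, ∑ _j : ι, ∑ _k : ι, L ^ 2 := by
          refine Finset.sum_le_sum fun i _ => Finset.sum_le_sum fun j _ =>
            Finset.sum_le_sum fun k _ => ?_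
          rw [← sq_abs]
          exact pow_le_pow_left₀ (abs_nonneg _) (ha i j k) 2
      _ = (Fintype.card ι : ℝ) ^ 3 * L ^ 2 := by
          simp only [Finset.sum_const, Finset.card_univ, nsmul_eq_mul]; ring
  calc √(∑ i, ∑ j, ∑ k, a i j k ^ 2) ≤ √((Fintype.card ι : ℝ) ^ 3 * L ^ 2) :=
        Real.sqrt_le_sqrt hsum
    _ = (Fintype.card ι : ℝ) ^ ((3 : ℝ) / 2) * L := by
        rw [Real.sqrt_mul (by positivity), Real.sqrt_sq hL, Real.sqrt_eq_rpow,
          ← Real.rpow_natCast, ← Real.rpow_mul (by positivity)]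
        norm_num

theorem stmt_8_general {d : ℕ} (f : EuclideanSpace ℝ (Fin d) → ℝ)
    (H1 H2 R : ℝ) (hH1 : 0 < H1) (hH2 : 0 ≤ H2) (hR : 0 < R)
    (hlip : ∀ x y : EuclideanSpace ℝ (Fin d), ‖y - x‖ ≤ R →
      ‖fderiv ℝ (gradient f) y - fderiv ℝ (gradient f) x‖ ≤
        (H1 + H2 * ‖gradient f x‖) * ‖y - x‖) :
    ∀ x : EuclideanSpace ℝ (Fin d),
      Real.sqrt (∑ i, ∑ j, ∑ k,
        (iteratedFDeriv ℝ 3 f x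
          ![EuclideanSpace.single i (1 : ℝ), EuclideanSpace.single j (1 : ℝ),
            EuclideanSpace.single k (1 : ℝ)]) ^ 2)
      ≤ (d : ℝ) ^ ((3 : ℝ) / 2) * (H1 + H2 * ‖gradient f x‖) := by
  intro x
  have hL : 0 ≤ H1 + H2 * ‖gradient f x‖ := by positivity
  have hT : ‖iteratedFDeriv ℝ 3 f x‖ ≤ H1 + H2 * ‖gradient f x‖ := by
    refine norm_iteratedFDeriv_three_le_of_lip' hL ?_
    filter_upwards [closedBall_mem_nhds x hR] with y hy
    rw [← norm_fderiv_gradient_sub]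
    exact hlip x y (by rwa [← dist_eq_norm])
  have hentry : ∀ i j k : Fin d, |iteratedFDeriv ℝ 3 f x
      ![EuclideanSpace.single i 1, EuclideanSpace.single j 1, EuclideanSpace.single k 1]| ≤
        H1 + H2 * ‖gradient f x‖ := fun i j k =>
    (Real.norm_eq_abs _ ▸ (iteratedFDeriv ℝ 3 f x).le_opNorm _).trans <| by
      simpa [Fin.prod_univ_three, PiLp.norm_single] using hT
  simpa using sqrt_sum_sum_sum_sq_le hL hentry

theorem stmt_8 {d : ℕ} (f : EuclideanSpace ℝ (Fin d) → ℝ) (hf : ContDiff ℝ 3 f)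
    (H1 H2 R : ℝ) (hH1 : 0 < H1) (hH2 : 0 ≤ H2) (hR : 0 < R)
    (hlip : ∀ x y : EuclideanSpace ℝ (Fin d), ‖y - x‖ ≤ R →
      ‖fderiv ℝ (gradient f) y - fderiv ℝ (gradient f) x‖ ≤
        (H1 + H2 * ‖gradient f x‖) * ‖y - x‖) :
    ∀ x : EuclideanSpace ℝ (Fin d),
      Real.sqrt (∑ i, ∑ j, ∑ k,
        (iteratedFDeriv ℝ 3 f x
          ![EuclideanSpace.single i (1 : ℝ), EuclideanSpace.single j (1 : ℝ),
            EuclideanSpace.single k (1 : ℝ)]) ^ 2)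
      ≤ (d : ℝ) ^ ((3 : ℝ) / 2) * (H1 + H2 * ‖gradient f x‖) :=
  stmt_8_general f H1 H2 R hH1 hH2 hR hlip
end
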